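/- arXiv:2006.04045 — 5 statements merged into one kernel-verified Lean document; each statement's English description precedes it below -/
import Mathlib

section
/- Consider the bi-level problem: minimize $F(x,y) = \frac12(x - y_2)^2 + \frac12 (y_1 - 1)^2$ over $x \in [-100,100]$ and $y = (y_1,y_2) \in \mathbb{R}^2$, subject to $y \in \arg\min_{y\in\mathbb{R}^2} \frac12 y_1^2 - x y_1$. Then the unique optimal solution is $x^* = 1$, $y^* = (1,1)$, with optimal value $0$. -/
/-- The counter-example bi-level problem: minimize
`F x y = (1/2)(x - y₂)² + (1/2)(y₁ - 1)²` over `x ∈ [-100,100]`,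
`y ∈ argmin_y (1/2) y₁² - x y₁`.  The unique optimal solution is
`x* = 1`, `y* = (1,1)` with optimal value `0`. -/
theorem stmt2
    (F : ℝ → ℝ × ℝ → ℝ)
    (hF : ∀ x y, F x y = (1/2) * (x - y.2) ^ 2 + (1/2) * (y.1 - 1) ^ 2)
    (S : ℝ → Set (ℝ × ℝ))
    (hS : ∀ x, S x = {y : ℝ × ℝ | ∀ z : ℝ × ℝ,
      (1/2) * y.1 ^ 2 - x * y.1 ≤ (1/2) * z.1 ^ 2 - x * z.1}) :
    ((1:ℝ) ∈ Set.Icc (-100:ℝ) 100 ∧ ((1:ℝ), (1:ℝ)) ∈ S 1 ∧ F 1 (1, 1) = 0) ∧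
    (∀ x ∈ Set.Icc (-100:ℝ) 100, ∀ y ∈ S x,
      0 ≤ F x y ∧ (F x y = 0 → x = 1 ∧ y = (1, 1))) := by
  constructor
  · refine ⟨by norm_num, ?_, by simp [hF]⟩
    rw [hS]
    intro z
    nlinarith [sq_nonneg (z.1 - 1)]
  · intro x hx y hy
    rw [hS] at hy
    have h1 : y.1 = x := by
      have := hy (x, 0)
      nlinarith [sq_nonneg (y.1 - x)]
    constructor
    · rw [hF]; positivity
    · intro h0
      rw [hF] at h0
      have hxy : x = y.2 := by nlinarith [sq_nonneg (x - y.2), sq_nonneg (y.1 - 1)]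
      have hy1 : y.1 = 1 := by nlinarith [sq_nonneg (x - y.2), sq_nonneg (y.1 - 1)]
      have hx1 : x = 1 := by rw [← h1, hy1]
      exact ⟨hx1, Prod.ext hy1 (by rw [← hxy, hx1])⟩
end

section
/- Let $\mathcal{X} \subseteq \mathbb{R}^n$ be compact, $f : \mathcal{X} \times \mathbb{R}^m \to \mathbb{R}$ jointly continuous, $f^*(x) = \min_y f(x,y)$ attained, and $\mathcal{S}(x) = \arg\min_y f(x,y)$ nonempty for all $x$. Suppose $\mathcal{S}$ is inner semicontinuous on $\mathcal{X}$, i.e., for every $\bar{x}\in\mathcal{X}$, every $\bar{y}\in\mathcal{S}(\bar{x})$, and every sequence $x^t \to \bar{x}$ in $\mathcal{X}$, there exist $y^t \in \mathcal{S}(x^t)$ with $y^t \to \bar{y}$. Let $\mathcal{Y} \subseteq \mathbb{R}^m$ be bounded and $\epsilon > 0$. Then there exists $\delta > 0$ such that if $(x,y)\in\mathcal{X}\times\mathcal{Y}$ satisfies $f(x,y) - f^*(x) \le \delta$, then $\mathrm{dist}(y, \mathcal{S}(x)) \le \epsilon$. -/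
/-- Proposition 2: under inner semicontinuity of the lower-level solution map,
near-optimality in value uniformly implies nearness to the solution set,
uniformly over a bounded set `Y` and the compact set `X`. -/
theorem stmt9 {n m : ℕ} (X : Set (EuclideanSpace ℝ (Fin n))) (hX : IsCompact X)
    (f : EuclideanSpace ℝ (Fin n) → EuclideanSpace ℝ (Fin m) → ℝ)
    (hfcont : ContinuousOn (fun p : EuclideanSpace ℝ (Fin n) × EuclideanSpace ℝ (Fin m) =>
      f p.1 p.2) (X ×ˢ Set.univ))
    (S : EuclideanSpace ℝ (Fin n) → Set (EuclideanSpace ℝ (Fin m)))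
    (hSdef : ∀ x ∈ X, S x = {y | ∀ z, f x y ≤ f x z})
    (hSne : ∀ x ∈ X, (S x).Nonempty)
    (hisc : ∀ xbar ∈ X, ∀ ybar ∈ S xbar, ∀ x : ℕ → EuclideanSpace ℝ (Fin n),
      (∀ t, x t ∈ X) → Filter.Tendsto x Filter.atTop (nhds xbar) →
      ∃ y : ℕ → EuclideanSpace ℝ (Fin m), (∀ t, y t ∈ S (x t)) ∧
        Filter.Tendsto y Filter.atTop (nhds ybar))
    (Y : Set (EuclideanSpace ℝ (Fin m))) (hY : Bornology.IsBounded Y)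
    (ε : ℝ) (hε : 0 < ε) :
    ∃ δ > (0:ℝ), ∀ x ∈ X, ∀ y ∈ Y,
      f x y - sInf (Set.range (f x)) ≤ δ → Metric.infDist y (S x) ≤ ε := by
  by_contra hcon
  push_neg at hcon
  have hseq : ∀ t : ℕ, ∃ x ∈ X, ∃ y ∈ Y,
      f x y - sInf (Set.range (f x)) ≤ 1 / ((t : ℝ) + 1) ∧ ε < Metric.infDist y (S x) := by
    intro t
    exact hcon (1 / ((t : ℝ) + 1)) (by positivity)
  choose xs hxs ys hys h1 h2 using hseq
  -- subsequence of xs converging in X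
  obtain ⟨xbar, hxbarX, φ, hφ, hxconv⟩ := hX.tendsto_subseq hxs
  -- subsequence of ys ∘ φ converging in closure Y
  have hysc : ∀ t, ys (φ t) ∈ closure Y := fun t => subset_closure (hys (φ t))
  obtain ⟨ybar, _, ψ, hψ, hyconv⟩ := hY.isCompact_closure.tendsto_subseq hysc
  set σ : ℕ → ℕ := φ ∘ ψ with hσ
  have hσmono : StrictMono σ := hφ.comp hψ
  have hxσconv : Filter.Tendsto (fun t => xs (σ t)) Filter.atTop (nhds xbar) :=
    hxconv.comp hψ.tendsto_atTop
  have hδ0 : Filter.Tendsto (fun t : ℕ => 1 / ((σ t : ℝ) + 1)) Filter.atTop (nhds 0) :=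
    tendsto_one_div_add_atTop_nhds_zero_nat.comp hσmono.tendsto_atTop
  -- joint continuity along sequences
  have hcontat : ∀ (p : EuclideanSpace ℝ (Fin n) × EuclideanSpace ℝ (Fin m)), p.1 ∈ X →
      ∀ (u : ℕ → EuclideanSpace ℝ (Fin n)) (v : ℕ → EuclideanSpace ℝ (Fin m)),
      (∀ t, u t ∈ X) → Filter.Tendsto u Filter.atTop (nhds p.1) →
      Filter.Tendsto v Filter.atTop (nhds p.2) →
      Filter.Tendsto (fun t => f (u t) (v t)) Filter.atTop (nhds (f p.1 p.2)) := by
    rintro ⟨a, b⟩ ha u v hu hut hvt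
    have hmem : (a, b) ∈ X ×ˢ (Set.univ : Set (EuclideanSpace ℝ (Fin m))) :=
      ⟨ha, Set.mem_univ _⟩
    have hpair : Filter.Tendsto (fun t => (u t, v t)) Filter.atTop
        (nhdsWithin (a, b) (X ×ˢ Set.univ)) := by
      rw [tendsto_nhdsWithin_iff]
      exact ⟨hut.prodMk_nhds hvt, Filter.Eventually.of_forall fun t => ⟨hu t, Set.mem_univ _⟩⟩
    exact ((hfcont (a, b) hmem).tendsto).comp hpair
  -- ybar is a solution at xbar
  have hybarS : ybar ∈ S xbar := by
    rw [hSdef xbar hxbarX]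
    intro z
    have hA : Filter.Tendsto (fun t => f (xs (σ t)) (ys (σ t))) Filter.atTop
        (nhds (f xbar ybar)) :=
      hcontat (xbar, ybar) hxbarX _ _ (fun t => hxs (σ t)) hxσconv hyconv
    have hB : Filter.Tendsto (fun t => f (xs (σ t)) z + 1 / ((σ t : ℝ) + 1)) Filter.atTop
        (nhds (f xbar z + 0)) :=
      (hcontat (xbar, z) hxbarX _ (fun _ => z) (fun t => hxs (σ t)) hxσconv
        tendsto_const_nhds).add hδ0
    rw [add_zero] at hB
    refine le_of_tendsto_of_tendsto' hA hB fun t => ?_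
    have hbdd : BddBelow (Set.range (f (xs (σ t)))) := by
      obtain ⟨w, hw⟩ := hSne (xs (σ t)) (hxs (σ t))
      rw [hSdef _ (hxs (σ t))] at hw
      exact ⟨f (xs (σ t)) w, by rintro _ ⟨z', rfl⟩; exact hw z'⟩
    have hle : sInf (Set.range (f (xs (σ t)))) ≤ f (xs (σ t)) z :=
      csInf_le hbdd ⟨z, rfl⟩
    have := h1 (σ t)
    linarith
  -- inner semicontinuity gives nearby solutions, contradiction
  obtain ⟨y', hy'S, hy'conv⟩ := hisc xbar hxbarX ybar hybarS (fun t => xs (σ t))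
    (fun t => hxs (σ t)) hxσconv
  have hdist : Filter.Tendsto (fun t => dist (ys (σ t)) (y' t)) Filter.atTop
      (nhds (dist ybar ybar)) := hyconv.dist hy'conv
  rw [dist_self] at hdist
  have hev : ∀ᶠ t in Filter.atTop, dist (ys (σ t)) (y' t) < ε :=
    hdist.eventually (eventually_lt_nhds hε)
  obtain ⟨t, ht⟩ := hev.exists
  have hle : Metric.infDist (ys (σ t)) (S (xs (σ t))) ≤ dist (ys (σ t)) (y' t) :=
    Metric.infDist_le_dist_of_mem (hy'S t)
  have := h2 (σ t)
  linarith
end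

section
/- Let $\mathcal{X} \subseteq \mathbb{R}^n$ be compact, $F : \mathcal{X}\times\mathbb{R}^m \to \mathbb{R}$ jointly continuous with $F(x,y)$ level-bounded in $y$ locally uniformly in $x\in\mathcal{X}$, and $\mathcal{S} : \mathcal{X} \rightrightarrows \mathbb{R}^m$ nonempty-valued and inner semicontinuous on $\mathcal{X}$. Suppose for each $x$ the set $\tilde{\mathcal{S}}(x) = \arg\min_{y\in\mathcal{S}(x)} F(x,y)$ is nonempty. Then $\bigcup_{x\in\mathcal{X}} \tilde{\mathcal{S}}(x)$ is a bounded subset of $\mathbb{R}^m$. -/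
/-- Lemma 1: boundedness of the optimistic selections `⋃ₓ argmin_{y ∈ S(x)} F(x,y)`
under inner semicontinuity of `S` and uniform level-boundedness of `F`. -/
theorem stmt11 {n m : ℕ} (X : Set (EuclideanSpace ℝ (Fin n))) (hX : IsCompact X)
    (F : EuclideanSpace ℝ (Fin n) → EuclideanSpace ℝ (Fin m) → ℝ)
    (hFcont : ContinuousOn (fun p : EuclideanSpace ℝ (Fin n) × EuclideanSpace ℝ (Fin m) =>
      F p.1 p.2) (X ×ˢ Set.univ))
    (hlevel : ∀ x₀ ∈ X, ∀ c : ℝ, ∃ δ > (0:ℝ), ∃ B : Set (EuclideanSpace ℝ (Fin m)),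
      Bornology.IsBounded B ∧ ∀ x ∈ Metric.ball x₀ δ ∩ X, {y | F x y ≤ c} ⊆ B)
    (S : EuclideanSpace ℝ (Fin n) → Set (EuclideanSpace ℝ (Fin m)))
    (hSne : ∀ x ∈ X, (S x).Nonempty)
    (hisc : ∀ xbar ∈ X, ∀ ybar ∈ S xbar, ∀ x : ℕ → EuclideanSpace ℝ (Fin n),
      (∀ t, x t ∈ X) → Filter.Tendsto x Filter.atTop (nhds xbar) →
      ∃ y : ℕ → EuclideanSpace ℝ (Fin m), (∀ t, y t ∈ S (x t)) ∧
        Filter.Tendsto y Filter.atTop (nhds ybar))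
    (Stilde : EuclideanSpace ℝ (Fin n) → Set (EuclideanSpace ℝ (Fin m)))
    (hStilde : ∀ x ∈ X, Stilde x = {y ∈ S x | ∀ z ∈ S x, F x y ≤ F x z})
    (hStne : ∀ x ∈ X, (Stilde x).Nonempty) :
    Bornology.IsBounded (⋃ x ∈ X, Stilde x) := by
  classical
  have key : ∀ x₀ ∈ X, ∃ r > (0:ℝ), ∃ B : Set (EuclideanSpace ℝ (Fin m)),
      Bornology.IsBounded B ∧ ∀ x ∈ Metric.ball x₀ r ∩ X, Stilde x ⊆ B := by
    intro x₀ hx₀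
    obtain ⟨y₀, hy₀⟩ := hSne x₀ hx₀
    have claim : ∃ δ > (0:ℝ), ∃ c : ℝ,
        ∀ x ∈ Metric.ball x₀ δ ∩ X, ∃ y ∈ S x, F x y ≤ c := by
      by_contra h
      push_neg at h
      have h' : ∀ t : ℕ, ∃ x, (x ∈ Metric.ball x₀ (1/(t+1)) ∩ X) ∧
          ∀ y ∈ S x, (t:ℝ) < F x y := by
        intro t
        obtain ⟨x, hx, hbig⟩ := h (1/(t+1)) (by positivity) (t:ℝ)
        exact ⟨x, hx, hbig⟩
      choose x hx hbig using h'
      have hxX : ∀ t, x t ∈ X := fun t => (hx t).2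
      have hxtend : Filter.Tendsto x Filter.atTop (nhds x₀) := by
        rw [tendsto_iff_dist_tendsto_zero]
        apply squeeze_zero (fun t => dist_nonneg) (fun t => le_of_lt (hx t).1)
        exact tendsto_one_div_add_atTop_nhds_zero_nat
      obtain ⟨y, hyS, hytend⟩ := hisc x₀ hx₀ y₀ hy₀ x hxX hxtend
      have hcw : ContinuousWithinAt
          (fun p : EuclideanSpace ℝ (Fin n) × EuclideanSpace ℝ (Fin m) => F p.1 p.2)
          (X ×ˢ Set.univ) (x₀, y₀) := hFcont _ ⟨hx₀, Set.mem_univ _⟩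
      have hFt : Filter.Tendsto (fun t => F (x t) (y t)) Filter.atTop
          (nhds (F x₀ y₀)) := by
        have h2 : Filter.Tendsto (fun t => (x t, y t)) Filter.atTop
            (nhdsWithin (x₀, y₀) (X ×ˢ Set.univ)) := by
          rw [tendsto_nhdsWithin_iff]
          exact ⟨hxtend.prodMk_nhds hytend,
            Filter.Eventually.of_forall fun t => ⟨hxX t, Set.mem_univ _⟩⟩
        exact hcw.tendsto.comp h2
      have hFtop : Filter.Tendsto (fun t => F (x t) (y t)) Filter.atTop Filter.atTop :=
        Filter.tendsto_atTop_mono (fun t => le_of_lt (hbig t (y t) (hyS t)))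
          tendsto_natCast_atTop_atTop
      exact not_tendsto_nhds_of_tendsto_atTop hFtop _ hFt
    obtain ⟨δ, hδ, c, hc⟩ := claim
    obtain ⟨δ', hδ', B, hB, hBsub⟩ := hlevel x₀ hx₀ c
    refine ⟨min δ δ', lt_min hδ hδ', B, hB, ?_⟩
    rintro xx ⟨hxb, hxX⟩ yy hyy
    have hxb1 : xx ∈ Metric.ball x₀ δ :=
      Metric.ball_subset_ball (min_le_left _ _) hxb
    have hxb2 : xx ∈ Metric.ball x₀ δ' :=
      Metric.ball_subset_ball (min_le_right _ _) hxb
    rw [hStilde xx hxX] at hyy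
    obtain ⟨hyS, hymin⟩ := hyy
    obtain ⟨z, hz, hzc⟩ := hc xx ⟨hxb1, hxX⟩
    exact hBsub xx ⟨hxb2, hxX⟩ (le_trans (hymin z hz) hzc)
  choose! r hr B hB hsub using key
  obtain ⟨t, htX, hcov⟩ := hX.elim_nhds_subcover (fun x₀ => Metric.ball x₀ (r x₀))
    (fun x hx => Metric.ball_mem_nhds _ (hr x hx))
  have hbd : Bornology.IsBounded (⋃ x₀ ∈ t, B x₀) :=
    (Bornology.isBounded_biUnion t.finite_toSet).2 fun i hi => hB i (htX i hi)
  refine hbd.subset ?_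
  rintro y hy
  simp only [Set.mem_iUnion] at hy ⊢
  obtain ⟨x, hxX, hyx⟩ := hy
  obtain ⟨x₀, hx₀t, hxball⟩ := Set.mem_iUnion₂.mp (hcov hxX)
  exact ⟨x₀, hx₀t, hsub x₀ (htX x₀ hx₀t) x ⟨hxball, hxX⟩ hyx⟩
end

section
/- Let $\mathcal{X}\subseteq\mathbb{R}^n$ be compact and $f : \mathcal{X}\times\mathbb{R}^m\to\mathbb{R}$ jointly continuous, with $f(x,\cdot)$ convex and $L_f$-smooth for each $x$, level-bounded in $y$ locally uniformly in $x\in\mathcal{X}$, and suppose $\mathcal{S}(x)=\arg\min_y f(x,y)$ is a singleton $\{y^*(x)\}$ for each $x\in\mathcal{X}$. Fix $y_0 \in \mathbb{R}^m$, $0 < s_l \le 1/L_f$, and define $y_{k+1}(x) = y_k(x) - s_l\nabla_y f(x, y_k(x))$ with $y_0(x) = y_0$. Then: (a) $\{y_K(x)\}$ is uniformly bounded over $x\in\mathcal{X}$ and $K\in\mathbb{N}$, and (b) $\sup_{x\in\mathcal{X}} |f(x, y_K(x)) - f^*(x)| \to 0$ as $K\to\infty$, where $f^*(x) = f(x, y^*(x))$.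 -/
/-!
Along gradient descent with step `s ≤ 1/L`, the descent lemma makes the values `f x (y_k)`
decrease, so every iterate and the minimiser `y*(x)` lie in the sublevel set
`{y | f x y ≤ c}` with `c = max_{x ∈ X} f x y₀`. Compactness of `X` and local uniform
level-boundedness make the union of these sublevel sets bounded, which gives (a).
Convexity turns one step into `‖y_{k+1} - z‖² + 2s (f y_{k+1} - f z) ≤ ‖y_k - z‖²`,
which telescopes to `2sK (f y_K - f*) ≤ ‖y₀ - y*(x)‖²`; the right side is bounded
uniformly in `x` by (a), which gives (b).
-/

open Set Filter Topology Bornology InnerProductSpace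

theorem IsCompact.isBounded_biUnion_of_nhdsWithin {α β : Type*} [TopologicalSpace α]
    [Bornology β] {X : Set α} (hX : IsCompact X) {S : α → Set β}
    (hS : ∀ x ∈ X, ∃ t ∈ 𝓝[X] x, IsBounded (⋃ x' ∈ t, S x')) :
    IsBounded (⋃ x ∈ X, S x) :=
  hX.induction_on (p := fun t => IsBounded (⋃ x ∈ t, S x)) (by simp)
    (fun _ _ hst ht => ht.subset (biUnion_subset_biUnion_left hst))
    (fun _ _ hs ht => by simpa only [biUnion_union] using hs.union ht) hS

theorem ConvexOn.add_le_of_hasDerivAt {φ : ℝ → ℝ} {d : ℝ} (hφ : ConvexOn ℝ univ φ)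
    (hd : HasDerivAt φ d 0) : φ 0 + d ≤ φ 1 := by
  have := hφ.le_slope_of_hasDerivAt (mem_univ 0) (mem_univ 1) one_pos hd
  rw [slope_def_field] at this
  linarith

theorem le_add_add_half_of_deriv_sub_le {φ φ' : ℝ → ℝ} {M : ℝ}
    (hφ : ∀ t, HasDerivAt φ (φ' t) t) (hM : ∀ t ∈ Ico (0 : ℝ) 1, φ' t - φ' 0 ≤ M * t) :
    φ 1 ≤ φ 0 + φ' 0 + M / 2 := by
  have hB : ∀ t, HasDerivAt (fun t => φ 0 + t * φ' 0 + M / 2 * t ^ 2) (φ' 0 + M * t) t := by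
    intro t
    exact ((((hasDerivAt_id t).mul_const (φ' 0)).const_add (φ 0)).add
      ((hasDerivAt_pow 2 t).const_mul (M / 2))).congr_deriv (by simp; ring)
  have := image_le_of_deriv_right_le_deriv_boundary (a := 0) (b := 1) (f := φ)
    (fun t _ => (hφ t).continuousAt.continuousWithinAt) (fun t _ => (hφ t).hasDerivWithinAt)
    (by simp) (fun t _ => (hB t).continuousAt.continuousWithinAt)
    (fun t _ => (hB t).hasDerivWithinAt) (fun t ht => by linarith [hM t ht])
    (right_mem_Icc.2 zero_le_one)
  simpa using this

variable {F : Type*} [NormedAddCommGroup F] [InnerProductSpace ℝ F] [CompleteSpace F]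

theorem HasGradientAt.hasDerivAt_comp_add_smul {f : F → ℝ} {g y v : F} {t : ℝ}
    (hf : HasGradientAt f g (y + t • v)) :
    HasDerivAt (fun t : ℝ => f (y + t • v)) ⟪g, v⟫_ℝ t := by
  have hline : HasDerivAt (fun t : ℝ => y + t • v) v t := by
    simpa using ((hasDerivAt_id t).smul_const v).const_add y
  have := hf.hasFDerivAt.comp_hasDerivAt t hline
  simp only [Function.comp_def, toDual_apply_apply] at this
  exact this

variable {f : F → ℝ} {g : F → F} {L s : ℝ}

theorem ConvexOn.add_inner_gradient_le (hf : ConvexOn ℝ univ f)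
    (hg : ∀ y, HasGradientAt f (g y) y) (y z : F) : f y + ⟪g y, z - y⟫_ℝ ≤ f z := by
  have hline : ConvexOn ℝ univ (fun t : ℝ => f (y + t • (z - y))) := by
    have heq : (fun t : ℝ => f (y + t • (z - y))) = f ∘ AffineMap.lineMap y z := by
      funext t
      simp [AffineMap.lineMap_apply_module', add_comm]
    simpa [heq] using hf.comp_affineMap (AffineMap.lineMap y z)
  have hd := (hg (y + (0 : ℝ) • (z - y))).hasDerivAt_comp_add_smul
  simpa using hline.add_le_of_hasDerivAt (by simpa using hd)

theorem le_add_inner_gradient_add_sq (hg : ∀ y, HasGradientAt f (g y) y)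
    (hlip : ∀ y z, ‖g y - g z‖ ≤ L * ‖y - z‖) (y z : F) :
    f z ≤ f y + ⟪g y, z - y⟫_ℝ + L / 2 * ‖z - y‖ ^ 2 := by
  set v := z - y
  have hd : ∀ t : ℝ, HasDerivAt (fun t : ℝ => f (y + t • v)) ⟪g (y + t • v), v⟫_ℝ t :=
    fun t => (hg _).hasDerivAt_comp_add_smul
  have := le_add_add_half_of_deriv_sub_le hd (M := L * ‖v‖ ^ 2) fun t ht => by
    calc ⟪g (y + t • v), v⟫_ℝ - ⟪g (y + (0 : ℝ) • v), v⟫_ℝ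
        = ⟪g (y + t • v) - g y, v⟫_ℝ := by simp [inner_sub_left]
      _ ≤ ‖g (y + t • v) - g y‖ * ‖v‖ := real_inner_le_norm _ _
      _ ≤ L * ‖t • v‖ * ‖v‖ := by
        gcongr
        simpa using hlip (y + t • v) y
      _ = L * ‖v‖ ^ 2 * t := by rw [norm_smul, Real.norm_of_nonneg ht.1]; ring
  simpa [v, mul_div_right_comm] using this

def gradientStep (g : F → F) (s : ℝ) (y : F) : F := y - s • g y

theorem apply_gradientStep_add_le (hg : ∀ y, HasGradientAt f (g y) y)
    (hlip : ∀ y z, ‖g y - g z‖ ≤ L * ‖y - z‖) (hs : 0 ≤ s) (hsL : s * L ≤ 1) (y : F) :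
    f (gradientStep g s y) + s / 2 * ‖g y‖ ^ 2 ≤ f y := by
  have h := le_add_inner_gradient_add_sq hg hlip y (gradientStep g s y)
  rw [gradientStep] at h ⊢
  rw [sub_sub_cancel_left, inner_neg_right, inner_smul_right, real_inner_self_eq_norm_sq,
    norm_neg, norm_smul, Real.norm_of_nonneg hs] at h
  nlinarith [mul_nonneg (mul_nonneg hs (sq_nonneg ‖g y‖)) (sub_nonneg.2 hsL)]

theorem sq_norm_gradientStep_sub_add_le (hf : ConvexOn ℝ univ f)
    (hg : ∀ y, HasGradientAt f (g y) y) (hlip : ∀ y z, ‖g y - g z‖ ≤ L * ‖y - z‖)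
    (hs : 0 ≤ s) (hsL : s * L ≤ 1) (y z : F) :
    ‖gradientStep g s y - z‖ ^ 2 + 2 * s * (f (gradientStep g s y) - f z) ≤ ‖y - z‖ ^ 2 := by
  have hconv := hf.add_inner_gradient_le hg y z
  have hdecr := apply_gradientStep_add_le hg hlip hs hsL y
  have hexpand : ‖gradientStep g s y - z‖ ^ 2
      = ‖y - z‖ ^ 2 + 2 * s * ⟪g y, z - y⟫_ℝ + s ^ 2 * ‖g y‖ ^ 2 := by
    rw [gradientStep, sub_right_comm, norm_sub_sq_real, inner_smul_right, norm_smul,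
      Real.norm_of_nonneg hs, real_inner_comm, ← neg_sub z y, inner_neg_right]
    ring
  nlinarith

theorem antitone_apply_of_gradientStep {y : ℕ → F}
    (hy : ∀ k, y (k + 1) = gradientStep g s (y k)) (hg : ∀ y, HasGradientAt f (g y) y)
    (hlip : ∀ y z, ‖g y - g z‖ ≤ L * ‖y - z‖) (hs : 0 ≤ s) (hsL : s * L ≤ 1) :
    Antitone fun k => f (y k) :=
  antitone_nat_of_succ_le fun k => by
    have := apply_gradientStep_add_le hg hlip hs hsL (y k)
    rw [hy]
    nlinarith [mul_nonneg hs (sq_nonneg ‖g (y k)‖)]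

theorem sq_norm_sub_add_mul_le_of_gradientStep {y : ℕ → F}
    (hy : ∀ k, y (k + 1) = gradientStep g s (y k)) (hf : ConvexOn ℝ univ f)
    (hg : ∀ y, HasGradientAt f (g y) y) (hlip : ∀ y z, ‖g y - g z‖ ≤ L * ‖y - z‖)
    (hs : 0 ≤ s) (hsL : s * L ≤ 1) (z : F) (K : ℕ) :
    ‖y K - z‖ ^ 2 + 2 * s * K * (f (y K) - f z) ≤ ‖y 0 - z‖ ^ 2 := by
  induction K with
  | zero => simp
  | succ K ih =>
    have hstep := sq_norm_gradientStep_sub_add_le hf hg hlip hs hsL (y K) z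
    have hmono := antitone_apply_of_gradientStep hy hg hlip hs hsL K.le_succ
    rw [← hy] at hstep
    push_cast
    nlinarith [mul_nonneg (mul_nonneg hs K.cast_nonneg) (sub_nonneg.2 hmono)]

/-- Proposition 5: for the parametric lower-level problem with singleton solution map,
the gradient descent iterates are uniformly bounded and their values converge
uniformly to the optimal values, without strong convexity. -/
theorem stmt13 {n m : ℕ} (X : Set (EuclideanSpace ℝ (Fin n))) (hX : IsCompact X)
    (f : EuclideanSpace ℝ (Fin n) → EuclideanSpace ℝ (Fin m) → ℝ)
    (hfcont : ContinuousOn (fun p : EuclideanSpace ℝ (Fin n) × EuclideanSpace ℝ (Fin m) =>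
      f p.1 p.2) (X ×ˢ Set.univ))
    (hconv : ∀ x ∈ X, ConvexOn ℝ Set.univ (f x))
    (g : EuclideanSpace ℝ (Fin n) → EuclideanSpace ℝ (Fin m) → EuclideanSpace ℝ (Fin m))
    (hgrad : ∀ x ∈ X, ∀ y, HasGradientAt (f x) (g x y) y)
    (Lf : ℝ) (hLf : 0 < Lf)
    (hlip : ∀ x ∈ X, ∀ y z, ‖g x y - g x z‖ ≤ Lf * ‖y - z‖)
    (hlevel : ∀ x₀ ∈ X, ∀ c : ℝ, ∃ δ > (0:ℝ), ∃ B : Set (EuclideanSpace ℝ (Fin m)),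
      Bornology.IsBounded B ∧ ∀ x ∈ Metric.ball x₀ δ ∩ X, {y | f x y ≤ c} ⊆ B)
    (ystar : EuclideanSpace ℝ (Fin n) → EuclideanSpace ℝ (Fin m))
    (hsingleton : ∀ x ∈ X, {y | ∀ z, f x y ≤ f x z} = {ystar x})
    (y₀ : EuclideanSpace ℝ (Fin m)) (s : ℝ) (hs : 0 < s) (hsle : s ≤ 1 / Lf)
    (yK : ℕ → EuclideanSpace ℝ (Fin n) → EuclideanSpace ℝ (Fin m))
    (hinit : ∀ x ∈ X, yK 0 x = y₀)
    (hiter : ∀ x ∈ X, ∀ k, yK (k + 1) x = yK k x - s • g x (yK k x)) :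
    (∃ C : ℝ, ∀ x ∈ X, ∀ K : ℕ, ‖yK K x‖ ≤ C) ∧
    (∀ ε > (0:ℝ), ∃ N : ℕ, ∀ K ≥ N, ∀ x ∈ X,
      |f x (yK K x) - f x (ystar x)| ≤ ε) := by
  have hopt : ∀ x ∈ X, ∀ z, f x (ystar x) ≤ f x z := fun x hx =>
    (hsingleton x hx).symm.subset (mem_singleton _)
  have hsL : s * Lf ≤ 1 := (le_div_iff₀ hLf).1 (by simpa using hsle)
  obtain ⟨c, hc⟩ : BddAbove ((fun x => f x y₀) '' X) :=
    hX.bddAbove_image (hfcont.comp (by fun_prop : Continuous fun x => (x, y₀)).continuousOn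
      fun x hx => ⟨hx, mem_univ _⟩)
  obtain ⟨C, hC⟩ : ∃ C, ∀ x ∈ X, ∀ y, f x y ≤ f x y₀ → ‖y‖ ≤ C := by
    have : IsBounded (⋃ x ∈ X, {y | f x y ≤ c}) :=
      hX.isBounded_biUnion_of_nhdsWithin fun x₀ hx₀ => by
        obtain ⟨δ, hδ, B, hB, hsub⟩ := hlevel x₀ hx₀ c
        refine ⟨Metric.ball x₀ δ ∩ X, ?_, hB.subset (iUnion₂_subset hsub)⟩
        exact inter_mem (mem_nhdsWithin_of_mem_nhds (Metric.ball_mem_nhds x₀ hδ))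
          self_mem_nhdsWithin
    obtain ⟨C, hC⟩ := this.exists_norm_le
    exact ⟨C, fun x hx y hy => hC y (mem_biUnion hx (hy.trans (hc ⟨x, hx, rfl⟩)))⟩
  have hvalue : ∀ x ∈ X, ∀ K, f x (yK K x) ≤ f x y₀ := fun x hx K => by
    simpa [hinit x hx] using antitone_apply_of_gradientStep (y := (yK · x)) (hiter x hx)
      (hgrad x hx) (hlip x hx) hs.le hsL K.zero_le
  refine ⟨⟨C, fun x hx K => hC x hx _ (hvalue x hx K)⟩, fun ε hε => ?_⟩
  have hgap : ∀ x ∈ X, ∀ K : ℕ,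
      2 * s * K * (f x (yK K x) - f x (ystar x)) ≤ (‖y₀‖ + C) ^ 2 := by
    intro x hx K
    have hrate := sq_norm_sub_add_mul_le_of_gradientStep (y := (yK · x)) (hiter x hx)
      (hconv x hx) (hgrad x hx) (hlip x hx) hs.le hsL (ystar x) K
    have hdist : ‖y₀ - ystar x‖ ≤ ‖y₀‖ + C :=
      (norm_sub_le _ _).trans (add_le_add_right (hC x hx _ (hopt x hx y₀)) _)
    rw [hinit x hx] at hrate
    nlinarith [sq_nonneg ‖yK K x - ystar x‖, pow_le_pow_left₀ (norm_nonneg _) hdist 2]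
  obtain ⟨N, hN⟩ := exists_nat_gt ((‖y₀‖ + C) ^ 2 / (2 * s * ε))
  refine ⟨N, fun K hK x hx => ?_⟩
  have hK : (‖y₀‖ + C) ^ 2 < 2 * s * ε * K :=
    (div_lt_iff₀' (by positivity)).1 (hN.trans_le (Nat.cast_le.2 hK))
  rw [abs_of_nonneg (sub_nonneg.2 (hopt x hx _))]
  by_contra! hlt
  nlinarith [hgap x hx K, mul_nonneg (mul_nonneg hs.le K.cast_nonneg) (sub_nonneg.2 hlt.le)]
end

section
/- Let $\mathcal{X}\subseteq\mathbb{R}^n$ be compact, $\varphi:\mathcal{X}\to\mathbb{R}$ lower semicontinuous, $\varphi_K:\mathcal{X}\to\mathbb{R}$ with: (i) for every $\epsilon>0$ there is $k(\epsilon)$ such that $\varphi(x)\le\varphi_K(x)+\epsilon$ for all $x\in\mathcal{X}$, $K>k(\epsilon)$; and (ii) $\varphi_K \to \varphi$ pointwise on $\mathcal{X}$. Suppose there is $\delta>0$ such that each $x_K$ is a local minimum of $\varphi_K$ with uniform radius $\delta$, i.e., $\varphi_K(x_K)\le\varphi_K(x)$ for all $x\in B_\delta(x_K)\cap\mathcal{X}$.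 Then every limit point $\bar{x}$ of $\{x_K\}$ is a local minimum of $\varphi$ on $\mathcal{X}$: $\varphi(\bar{x})\le\varphi(x)$ for all $x\in B_{\delta/2}(\bar{x})\cap\mathcal{X}$. -/
/-- Theorem 5 (appendix): uniform-radius local minimizers of the approximations
accumulate at local minimizers of the LSC limit. -/
theorem stmt17 {n : ℕ} (X : Set (EuclideanSpace ℝ (Fin n))) (hX : IsCompact X)
    (φ : EuclideanSpace ℝ (Fin n) → ℝ) (φK : ℕ → EuclideanSpace ℝ (Fin n) → ℝ)
    (hlsc : LowerSemicontinuousOn φ X)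
    (happrox : ∀ ε > (0:ℝ), ∃ N : ℕ, ∀ K > N, ∀ x ∈ X, φ x ≤ φK K x + ε)
    (hptwise : ∀ x ∈ X, Filter.Tendsto (fun K => φK K x) Filter.atTop (nhds (φ x)))
    (δ : ℝ) (hδ : 0 < δ)
    (xK : ℕ → EuclideanSpace ℝ (Fin n))
    (hxKmem : ∀ K, xK K ∈ X)
    (hxKlocmin : ∀ K, ∀ x ∈ Metric.ball (xK K) δ ∩ X, φK K (xK K) ≤ φK K x)
    (xbar : EuclideanSpace ℝ (Fin n))
    (hcluster : ∃ ψ : ℕ → ℕ, StrictMono ψ ∧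
      Filter.Tendsto (fun i => xK (ψ i)) Filter.atTop (nhds xbar)) :
    ∀ x ∈ Metric.ball xbar (δ / 2) ∩ X, φ xbar ≤ φ x := by
  obtain ⟨ψ, hψmono, hψtend⟩ := hcluster
  have hxbarX : xbar ∈ X :=
    hX.isClosed.mem_of_tendsto hψtend (Filter.Eventually.of_forall fun i => hxKmem (ψ i))
  rintro x ⟨hxball, hxX⟩
  -- reduce to: ∀ ε > 0, φ xbar ≤ φ x + ε
  have key : ∀ ε > (0:ℝ), φ xbar ≤ φ x + ε := by
    intro ε hε
    have hε3 : (0:ℝ) < ε / 3 := by linarith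
    -- eventually close to xbar
    have h1 : ∀ᶠ i in Filter.atTop, dist (xK (ψ i)) xbar < δ / 2 :=
      (Metric.tendsto_nhds.mp hψtend) (δ / 2) (by linarith)
    -- lsc estimate
    have htendW : Filter.Tendsto (fun i => xK (ψ i)) Filter.atTop (nhdsWithin xbar X) := by
      rw [tendsto_nhdsWithin_iff]
      exact ⟨hψtend, Filter.Eventually.of_forall fun i => hxKmem (ψ i)⟩
    have h2 : ∀ᶠ i in Filter.atTop, φ xbar - ε / 3 < φ (xK (ψ i)) :=
      htendW.eventually (hlsc xbar hxbarX (φ xbar - ε / 3) (by linarith))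
    -- uniform approximation
    obtain ⟨N, hN⟩ := happrox (ε / 3) hε3
    have h3 : ∀ᶠ i in Filter.atTop, ψ i > N := by
      have : Filter.Tendsto ψ Filter.atTop Filter.atTop := hψmono.tendsto_atTop
      exact this.eventually_gt_atTop N
    -- pointwise convergence at x
    have h4 : ∀ᶠ i in Filter.atTop, φK (ψ i) x < φ x + ε / 3 := by
      have := (hptwise x hxX).comp hψmono.tendsto_atTop
      exact this.eventually (Filter.Tendsto.eventually_lt_const (by linarith) Filter.tendsto_id)
    obtain ⟨i, ⟨⟨hd, hlscb⟩, hgt⟩, hlt⟩ := (((h1.and h2).and h3).and h4).exists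
    have hball : x ∈ Metric.ball (xK (ψ i)) δ ∩ X := by
      refine ⟨?_, hxX⟩
      have : dist x (xK (ψ i)) ≤ dist x xbar + dist xbar (xK (ψ i)) := dist_triangle _ _ _
      have hx1 : dist x xbar < δ / 2 := Metric.mem_ball.mp hxball
      have hx2 : dist xbar (xK (ψ i)) < δ / 2 := by rwa [dist_comm]
      exact Metric.mem_ball.mpr (by linarith)
    have hmin := hxKlocmin (ψ i) x hball
    have happ := hN (ψ i) hgt (xK (ψ i)) (hxKmem (ψ i))
    linarith
  exact le_of_forall_pos_le_add key
end
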